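/- Let n = 6, r = 4, χ = (0, c, 2+a, 2+b) with 0 < a < b < c < 1 rational. For the multipartitions Λ = ((0), (3), (1,1), (1)) and M = ((3), (0), (1), (1,1)), we have Λ ≥_χ M but not Λ ⊵_χ M. Hence in general the order ≥_χ strictly contains the adjacency order ⊵_χ. -/

import Mathlib

open Finset

/-- Boxes of a multipartition, as triples (component, (row, col)). -/
def mbBoxes {r : ℕ} (Λ : Fin r → YoungDiagram) : Finset (Fin r × ℕ × ℕ) :=
  Finset.univ.biUnion fun i => (Λ i).cells.image fun c => (i, c)

/-- Shifted content of a box (i, (y, x)): χ i + x - y. -/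
def cont {r : ℕ} (χ : Fin r → ℚ) (b : Fin r × ℕ × ℕ) : ℚ :=
  χ b.1 + (b.2.2 : ℚ) - (b.2.1 : ℚ)

/-- Λ is an r-multipartition of n. -/
def isMP {r : ℕ} (n : ℕ) (Λ : Fin r → YoungDiagram) : Prop :=
  ∑ i, (Λ i).card = n

/-- The order ≥_χ : a bijection of boxes with contents of Λ-boxes dominating. -/
def contGE {r : ℕ} (χ : Fin r → ℚ) (Λ M : Fin r → YoungDiagram) : Prop :=
  ∃ e : ↥(mbBoxes Λ) ≃ ↥(mbBoxes M),
    ∀ b : ↥(mbBoxes Λ), cont χ (b : Fin r × ℕ × ℕ) ≥ cont χ ((e b : Fin r × ℕ × ℕ))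

/-- χ is generic for n: χ i - χ j avoids {0, ±1, …, ±(n-1)} for i ≠ j. -/
def generic (n : ℕ) {r : ℕ} (χ : Fin r → ℚ) : Prop :=
  ∀ i j : Fin r, i ≠ j → ∀ k : ℤ, k.natAbs < n → χ i - χ j ≠ (k : ℚ)

/-- Adjacency with explicit witnesses: Λ∖M lives in component l, M∖Λ in component m,
and they correspond under translation by (dy, dx). -/
def adjWitness {r : ℕ} (Λ M : Fin r → YoungDiagram) (l m : Fin r) (dy dx : ℤ) : Prop :=
  (∀ i, i ≠ l → ∀ c ∈ (Λ i).cells, c ∈ (M i).cells) ∧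
  (∀ i, i ≠ m → ∀ c ∈ (M i).cells, c ∈ (Λ i).cells) ∧
  (∀ y x : ℕ, ((y, x) ∈ (Λ l).cells ∧ (y, x) ∉ (M l).cells) ↔
    ∃ y' x' : ℕ, ((y', x') ∈ (M m).cells ∧ (y', x') ∉ (Λ m).cells) ∧
      (y' : ℤ) = (y : ℤ) + dy ∧ (x' : ℤ) = (x : ℤ) + dx)

def adjacent {r : ℕ} (Λ M : Fin r → YoungDiagram) : Prop :=
  ∃ l m dy dx, adjWitness Λ M l m dy dx

/-- One step of the adjacency order. -/
def adjStep {r : ℕ} (χ : Fin r → ℚ) (Λ M : Fin r → YoungDiagram) : Prop :=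
  adjacent Λ M ∧ contGE χ Λ M

/-- The adjacency order ⊵_χ : transitive closure of single steps. -/
def adjOrder {r : ℕ} (χ : Fin r → ℚ) : (Fin r → YoungDiagram) → (Fin r → YoungDiagram) → Prop :=
  Relation.ReflTransGen (adjStep χ)

/-- Multiset of shifted contents of the boxes of Λ. -/
def contMultiset {r : ℕ} (χ : Fin r → ℚ) (Λ : Fin r → YoungDiagram) : Multiset ℚ :=
  (mbBoxes Λ).val.map (cont χ)

/-- χ lies in the asymptotic chamber: χ_i − χ_{i+1} > n − 1. -/
def asymptotic (n : ℕ) {r : ℕ} (χ : Fin r → ℚ) : Prop :=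
  ∀ i : ℕ, ∀ h : i + 1 < r, χ ⟨i, Nat.lt_of_succ_lt h⟩ - χ ⟨i + 1, h⟩ > (n : ℚ) - 1

/-- Concatenated padded row-length sequence: Λ_{n·k+i} = λ^{k+1}_i (0-indexed here). -/
def rowSeq (n : ℕ) {r : ℕ} (Λ : Fin r → YoungDiagram) (t : ℕ) : ℕ :=
  if h : t / n < r then (Λ ⟨t / n, h⟩).rowLen (t % n) else 0

/-- Shifted contents sorted in decreasing order. -/
def descContents {r : ℕ} (χ : Fin r → ℚ) (Λ : Fin r → YoungDiagram) : List ℚ :=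
  (contMultiset χ Λ).sort (· ≥ ·)

/-- The empty partition. -/
def P0 : YoungDiagram := YoungDiagram.ofRowLens [] (by decide)
/-- The partition (3). -/
def P3 : YoungDiagram := YoungDiagram.ofRowLens [3] (by decide)
/-- The partition (1,1). -/
def P11 : YoungDiagram := YoungDiagram.ofRowLens [1, 1] (by decide)
/-- The partition (1). -/
def P1 : YoungDiagram := YoungDiagram.ofRowLens [1] (by decide)

/-- Λ = ((0), (3), (1,1), (1)). -/
def LamEx : Fin 4 → YoungDiagram := ![P0, P3, P11, P1]
/-- M = ((3), (0), (1), (1,1)). -/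
def MEx : Fin 4 → YoungDiagram := ![P3, P0, P1, P11]
/-- χ = (0, c, 2+a, 2+b). -/
def chiex (a b c : ℚ) : Fin 4 → ℚ := ![0, c, 2 + a, 2 + b]

section Aux
variable {r : ℕ} (χ : Fin r → ℚ)

lemma mem_mbBoxes {Λ : Fin r → YoungDiagram} {p : Fin r × ℕ × ℕ} :
    p ∈ mbBoxes Λ ↔ p.2 ∈ (Λ p.1).cells := by
  obtain ⟨i, c⟩ := p
  simp only [mbBoxes, Finset.mem_biUnion, Finset.mem_univ, true_and, Finset.mem_image,
    Prod.mk.injEq]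
  constructor
  · rintro ⟨j, d, hd, rfl, rfl⟩; exact hd
  · intro h; exact ⟨i, c, h, rfl, rfl⟩

lemma card_mbBoxes (Λ : Fin r → YoungDiagram) :
    (mbBoxes Λ).card = ∑ i, (Λ i).card := by
  rw [mbBoxes, Finset.card_biUnion]
  · refine Finset.sum_congr rfl fun i _ => ?_
    rw [Finset.card_image_of_injective _ (fun x y h => by simpa using h)]
  · intro i _ j _ hij
    simp only [Finset.disjoint_left, Finset.mem_image]
    rintro p ⟨d, _, rfl⟩ ⟨d', _, h⟩
    rw [Prod.mk.injEq] at h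
    exact hij h.1.symm

lemma sum_mbBoxes (Λ : Fin r → YoungDiagram) (f : Fin r × ℕ × ℕ → ℚ) :
    ∑ p ∈ mbBoxes Λ, f p = ∑ i, ∑ c ∈ (Λ i).cells, f (i, c) := by
  rw [mbBoxes, Finset.sum_biUnion]
  · refine Finset.sum_congr rfl fun i _ => ?_
    rw [Finset.sum_image (fun x _ y _ h => by simpa using h)]
  · intro i _ j _ hij
    simp only [Finset.disjoint_left, Finset.mem_image]
    rintro p ⟨d, _, rfl⟩ ⟨d', _, h⟩
    rw [Prod.mk.injEq] at h
    exact hij h.1.symm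

lemma contGE_card_eq {A B : Fin r → YoungDiagram} (h : contGE χ A B) :
    (mbBoxes A).card = (mbBoxes B).card := by
  obtain ⟨e, _⟩ := h
  have := Fintype.card_congr e
  simpa [Fintype.card_coe] using this

lemma contGE_sum_le {A B : Fin r → YoungDiagram} (h : contGE χ A B) :
    ∑ p ∈ mbBoxes B, cont χ p ≤ ∑ p ∈ mbBoxes A, cont χ p := by
  obtain ⟨e, he⟩ := h
  have h1 : ∑ p ∈ mbBoxes A, cont χ p = ∑ b : ↥(mbBoxes A), cont χ (b : Fin r × ℕ × ℕ) := by
    rw [← Finset.sum_attach (mbBoxes A) (fun p => cont χ p)]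
    rfl
  have h2 : ∑ p ∈ mbBoxes B, cont χ p = ∑ b : ↥(mbBoxes B), cont χ (b : Fin r × ℕ × ℕ) := by
    rw [← Finset.sum_attach (mbBoxes B) (fun p => cont χ p)]
    rfl
  rw [h1, h2, ← Equiv.sum_comp e (fun b : ↥(mbBoxes B) => cont χ (b : Fin r × ℕ × ℕ))]
  exact Finset.sum_le_sum fun b _ => he b

lemma contGE_exists_ge {A B : Fin r → YoungDiagram} (h : contGE χ A B) :
    ∀ q ∈ mbBoxes B, ∃ p ∈ mbBoxes A, cont χ q ≤ cont χ p := by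
  obtain ⟨e, he⟩ := h
  intro q hq
  refine ⟨e.symm ⟨q, hq⟩, (e.symm ⟨q, hq⟩).2, ?_⟩
  have := he (e.symm ⟨q, hq⟩)
  rwa [e.apply_symm_apply] at this

/-- A Young diagram avoiding (0,1) is a column. -/
lemma young_col {μ : YoungDiagram} (h : (0,1) ∉ μ) :
    μ.cells = (Finset.range μ.card).image (fun t => (t, 0)) := by
  have hx : ∀ p ∈ μ.cells, p.2 = 0 := by
    rintro ⟨y, x⟩ hp
    by_contra hx0
    exact h (μ.up_left_mem (Nat.zero_le _) (Nat.one_le_iff_ne_zero.2 hx0)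
      ((YoungDiagram.mem_cells _).1 hp))
  have key : ∀ y : ℕ, (y, 0) ∈ μ.cells ↔ y < μ.card := by
    intro y
    constructor
    · intro hy
      have hsub : (Finset.range (y+1)).image (fun t => (t, 0)) ⊆ μ.cells := by
        intro p hp
        simp only [Finset.mem_image, Finset.mem_range] at hp
        obtain ⟨t, ht, rfl⟩ := hp
        exact (YoungDiagram.mem_cells _).2
          (μ.up_left_mem (Nat.lt_succ_iff.1 ht) le_rfl ((YoungDiagram.mem_cells _).1 hy))
      have := Finset.card_le_card hsub
      rw [Finset.card_image_of_injective _ (fun s t h => by simpa using h),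
        Finset.card_range] at this
      exact Nat.lt_of_lt_of_le (Nat.lt_succ_self y) this
    · intro hy
      by_contra hmem
      have hsub : μ.cells ⊆ (Finset.range y).image (fun t => (t, 0)) := by
        rintro ⟨y', x'⟩ hp
        have hx' := hx _ hp
        simp only at hx'
        subst hx'
        simp only [Finset.mem_image, Finset.mem_range]
        refine ⟨y', ?_, rfl⟩
        by_contra hge
        exact hmem ((YoungDiagram.mem_cells _).2
          (μ.up_left_mem (Nat.le_of_not_lt hge) le_rfl ((YoungDiagram.mem_cells _).1 hp)))
      have := Finset.card_le_card hsub
      rw [Finset.card_image_of_injective _ (fun s t h => by simpa using h),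
        Finset.card_range] at this
      exact absurd hy (Nat.not_lt.2 this)
  ext ⟨y, x⟩
  simp only [Finset.mem_image, Finset.mem_range]
  constructor
  · intro hp
    have := hx _ hp
    simp only at this
    subst this
    exact ⟨y, (key y).1 hp, rfl⟩
  · rintro ⟨t, ht, h'⟩
    injection h' with h1 h2
    subst h1; subst h2
    exact (key t).2 ht

/-- A Young diagram avoiding (1,0) is a row. -/
lemma young_row {μ : YoungDiagram} (h : (1,0) ∉ μ) :
    μ.cells = (Finset.range μ.card).image (fun t => (0, t)) := by
  have hx : ∀ p ∈ μ.cells, p.1 = 0 := by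
    rintro ⟨y, x⟩ hp
    by_contra hx0
    exact h (μ.up_left_mem (Nat.one_le_iff_ne_zero.2 hx0) (Nat.zero_le _)
      ((YoungDiagram.mem_cells _).1 hp))
  have key : ∀ x : ℕ, (0, x) ∈ μ.cells ↔ x < μ.card := by
    intro x
    constructor
    · intro hy
      have hsub : (Finset.range (x+1)).image (fun t => (0, t)) ⊆ μ.cells := by
        intro p hp
        simp only [Finset.mem_image, Finset.mem_range] at hp
        obtain ⟨t, ht, rfl⟩ := hp
        exact (YoungDiagram.mem_cells _).2
          (μ.up_left_mem le_rfl (Nat.lt_succ_iff.1 ht) ((YoungDiagram.mem_cells _).1 hy))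
      have := Finset.card_le_card hsub
      rw [Finset.card_image_of_injective _ (fun s t h => by simpa using h),
        Finset.card_range] at this
      exact Nat.lt_of_lt_of_le (Nat.lt_succ_self x) this
    · intro hy
      by_contra hmem
      have hsub : μ.cells ⊆ (Finset.range x).image (fun t => (0, t)) := by
        rintro ⟨y', x'⟩ hp
        have hx' := hx _ hp
        simp only at hx'
        subst hx'
        simp only [Finset.mem_image, Finset.mem_range]
        refine ⟨x', ?_, rfl⟩
        by_contra hge
        exact hmem ((YoungDiagram.mem_cells _).2
          (μ.up_left_mem le_rfl (Nat.le_of_not_lt hge) ((YoungDiagram.mem_cells _).1 hp)))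
      have := Finset.card_le_card hsub
      rw [Finset.card_image_of_injective _ (fun s t h => by simpa using h),
        Finset.card_range] at this
      exact absurd hy (Nat.not_lt.2 this)
  ext ⟨y, x⟩
  simp only [Finset.mem_image, Finset.mem_range]
  constructor
  · intro hp
    have hx' := hx _ hp
    simp only at hx'
    subst hx'
    exact ⟨x, (key x).1 hp, rfl⟩
  · rintro ⟨t, ht, h'⟩
    injection h' with h1 h2
    subst h1; subst h2
    exact (key t).2 ht

section Young2

lemma young_zero_mem {μ : YoungDiagram} (h : μ.cells.Nonempty) : ((0:ℕ),(0:ℕ)) ∈ μ.cells := by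
  obtain ⟨⟨y, x⟩, hp⟩ := h
  exact (YoungDiagram.mem_cells _).2
    (μ.up_left_mem (Nat.zero_le _) (Nat.zero_le _) ((YoungDiagram.mem_cells _).1 hp))

lemma young_card_one {μ : YoungDiagram} (h : μ.cells.card = 1) :
    μ.cells = {((0:ℕ),(0:ℕ))} := by
  have h0 : ((0:ℕ),(0:ℕ)) ∈ μ.cells :=
    young_zero_mem (Finset.card_pos.1 (by omega))
  exact (Finset.eq_of_subset_of_card_le (Finset.singleton_subset_iff.2 h0)
    (by rw [h]; decide)).symm

lemma young_card_two {μ : YoungDiagram} (h : μ.cells.card = 2) :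
    μ.cells = {((0:ℕ),(0:ℕ)), (0,1)} ∨ μ.cells = {((0:ℕ),(0:ℕ)), (1,0)} := by
  by_cases h10 : ((1:ℕ),(0:ℕ)) ∈ μ
  · right
    have h0 : ((0:ℕ),(0:ℕ)) ∈ μ.cells :=
      young_zero_mem (Finset.card_pos.1 (by omega))
    refine (Finset.eq_of_subset_of_card_le ?_ (by rw [h]; decide)).symm
    intro p hp
    simp only [Finset.mem_insert, Finset.mem_singleton] at hp
    rcases hp with rfl | rfl
    · exact h0
    · exact (YoungDiagram.mem_cells _).2 h10
  · left
    have := young_row h10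
    rw [show μ.card = 2 from h] at this
    rw [this]
    decide

/-- Any cell outside the first row of a diagram containing the row (3),
with (0,3) excluded, forces (1,0). -/
lemma young_extra_rowcase {μ : YoungDiagram} (h03 : ((0:ℕ),(3:ℕ)) ∉ μ)
    {e : ℕ × ℕ} (he : e ∈ μ.cells) (hne : e ∉ ({(0,0),(0,1),(0,2)} : Finset (ℕ × ℕ))) :
    1 ≤ e.1 := by
  obtain ⟨y, x⟩ := e
  by_contra hy
  have hy0 : y = 0 := by omega
  subst hy0
  simp only [Finset.mem_insert, Finset.mem_singleton, Prod.mk.injEq] at hne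
  push_neg at hne
  simp only [true_implies] at hne
  have hx3 : 3 ≤ x := by omega
  exact h03 (μ.up_left_mem le_rfl hx3 ((YoungDiagram.mem_cells _).1 he))

lemma young_row3_plus {μ : YoungDiagram}
    (hsub : ({(0,0),(0,1),(0,2)} : Finset (ℕ × ℕ)) ⊆ μ.cells)
    (hcard : μ.cells.card = 4) (h03 : ((0:ℕ),(3:ℕ)) ∉ μ) :
    μ.cells = {(0,0),(0,1),(0,2),(1,0)} := by
  have hss : ({(0,0),(0,1),(0,2)} : Finset (ℕ × ℕ)) ⊂ μ.cells :=
    hsub.ssubset_of_ne (fun hcc => by rw [← hcc] at hcard; exact absurd hcard (by decide))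
  obtain ⟨e, he, hne⟩ := Finset.exists_of_ssubset hss
  have h1e := young_extra_rowcase h03 he hne
  have h10 : ((1:ℕ),(0:ℕ)) ∈ μ.cells :=
    (YoungDiagram.mem_cells _).2
      (μ.up_left_mem h1e (Nat.zero_le _) ((YoungDiagram.mem_cells _).1 he))
  refine (Finset.eq_of_subset_of_card_le ?_ (by rw [hcard]; decide)).symm
  intro p hp
  simp only [Finset.mem_insert, Finset.mem_singleton] at hp
  rcases hp with rfl | rfl | rfl | rfl
  · exact hsub (by decide)
  · exact hsub (by decide)
  · exact hsub (by decide)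
  · exact h10

lemma young_row3_plus2 {μ : YoungDiagram}
    (hsub : ({(0,0),(0,1),(0,2)} : Finset (ℕ × ℕ)) ⊆ μ.cells)
    (hcard : μ.cells.card = 5) (h03 : ((0:ℕ),(3:ℕ)) ∉ μ) :
    μ.cells = {(0,0),(0,1),(0,2),(1,0),(1,1)} ∨
    μ.cells = {(0,0),(0,1),(0,2),(1,0),(2,0)} := by
  have hss : ({(0,0),(0,1),(0,2)} : Finset (ℕ × ℕ)) ⊂ μ.cells :=
    hsub.ssubset_of_ne (fun hcc => by rw [← hcc] at hcard; exact absurd hcard (by decide))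
  obtain ⟨e, he, hne⟩ := Finset.exists_of_ssubset hss
  have h1e := young_extra_rowcase h03 he hne
  have h10 : ((1:ℕ),(0:ℕ)) ∈ μ.cells :=
    (YoungDiagram.mem_cells _).2
      (μ.up_left_mem h1e (Nat.zero_le _) ((YoungDiagram.mem_cells _).1 he))
  have hsub4 : ({(0,0),(0,1),(0,2),(1,0)} : Finset (ℕ × ℕ)) ⊆ μ.cells := by
    intro p hp
    simp only [Finset.mem_insert, Finset.mem_singleton] at hp
    rcases hp with rfl | rfl | rfl | rfl
    · exact hsub (by decide)
    · exact hsub (by decide)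
    · exact hsub (by decide)
    · exact h10
  have hss4 : ({(0,0),(0,1),(0,2),(1,0)} : Finset (ℕ × ℕ)) ⊂ μ.cells :=
    hsub4.ssubset_of_ne (fun hcc => by rw [← hcc] at hcard; exact absurd hcard (by decide))
  obtain ⟨e', he', hne'⟩ := Finset.exists_of_ssubset hss4
  have h1e' : 1 ≤ e'.1 := young_extra_rowcase h03 he' (fun hmem => hne' (by
    simp only [Finset.mem_insert, Finset.mem_singleton] at hmem ⊢
    tauto))
  obtain ⟨y', x'⟩ := e'
  simp only [Finset.mem_insert, Finset.mem_singleton, Prod.mk.injEq, not_or] at hne'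
  by_cases hy2 : 2 ≤ y'
  · right
    have h20 : ((2:ℕ),(0:ℕ)) ∈ μ.cells :=
      (YoungDiagram.mem_cells _).2
        (μ.up_left_mem hy2 (Nat.zero_le _) ((YoungDiagram.mem_cells _).1 he'))
    refine (Finset.eq_of_subset_of_card_le ?_ (by rw [hcard]; decide)).symm
    intro p hp
    simp only [Finset.mem_insert, Finset.mem_singleton] at hp
    rcases hp with rfl | rfl | rfl | rfl | rfl
    · exact hsub4 (by decide)
    · exact hsub4 (by decide)
    · exact hsub4 (by decide)
    · exact hsub4 (by decide)
    · exact h20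
  · left
    have hy1 : y' = 1 := by simp only at h1e'; omega
    subst hy1
    have hx1 : 1 ≤ x' := by
      rcases Nat.eq_zero_or_pos x' with rfl | h
      · exact absurd ⟨rfl, rfl⟩ hne'.2.2.2
      · exact h
    have h11 : ((1:ℕ),(1:ℕ)) ∈ μ.cells :=
      (YoungDiagram.mem_cells _).2
        (μ.up_left_mem le_rfl hx1 ((YoungDiagram.mem_cells _).1 he'))
    refine (Finset.eq_of_subset_of_card_le ?_ (by rw [hcard]; decide)).symm
    intro p hp
    simp only [Finset.mem_insert, Finset.mem_singleton] at hp
    rcases hp with rfl | rfl | rfl | rfl | rfl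
    · exact hsub4 (by decide)
    · exact hsub4 (by decide)
    · exact hsub4 (by decide)
    · exact hsub4 (by decide)
    · exact h11

lemma fin4 (i : Fin 4) : i = 0 ∨ i = 1 ∨ i = 2 ∨ i = 3 := by
  fin_cases i <;> decide

end Young2

/-- forward map Λ-boxes → M-boxes -/
def fEx : Fin 4 × ℕ × ℕ → Fin 4 × ℕ × ℕ := fun p =>
  if p = (1,0,2) then (0,0,2) else
  if p = (1,0,1) then (3,1,0) else
  if p = (1,0,0) then (0,0,0) else
  if p = (2,0,0) then (2,0,0) else
  if p = (2,1,0) then (0,0,1) else (3,0,0)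

def gEx : Fin 4 × ℕ × ℕ → Fin 4 × ℕ × ℕ := fun p =>
  if p = (0,0,2) then (1,0,2) else
  if p = (3,1,0) then (1,0,1) else
  if p = (0,0,0) then (1,0,0) else
  if p = (2,0,0) then (2,0,0) else
  if p = (0,0,1) then (2,1,0) else (3,0,0)

lemma hfm : ∀ x ∈ mbBoxes LamEx, fEx x ∈ mbBoxes MEx := by decide
lemma hgm : ∀ x ∈ mbBoxes MEx, gEx x ∈ mbBoxes LamEx := by decide
lemma hgf : ∀ x ∈ mbBoxes LamEx, gEx (fEx x) = x := by decide
lemma hfg : ∀ x ∈ mbBoxes MEx, fEx (gEx x) = x := by decide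

@[simp] lemma vec4_two {α : Type*} (x y z w : α) : ![x, y, z, w] 2 = z := rfl
@[simp] lemma vec4_three {α : Type*} (x y z w : α) : ![x, y, z, w] 3 = w := rfl

lemma part1 (a b c : ℚ) (h0 : 0 < a) (hab : a < b) (hbc : b < c) (hc1 : c < 1) :
    contGE (chiex a b c) LamEx MEx := by
  refine ⟨⟨fun p => ⟨fEx p, hfm p p.2⟩, fun p => ⟨gEx p, hgm p p.2⟩,
    fun p => Subtype.ext (hgf p p.2), fun p => Subtype.ext (hfg p p.2)⟩, ?_⟩
  rintro ⟨p, hp⟩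
  have hL : mbBoxes LamEx = {(1,0,0),(1,0,1),(1,0,2),(2,0,0),(2,1,0),(3,0,0)} := by decide
  rw [hL] at hp
  simp only [Finset.mem_insert, Finset.mem_singleton] at hp
  simp only [Equiv.coe_fn_mk]
  rcases hp with rfl|rfl|rfl|rfl|rfl|rfl
  · rw [show fEx (1,0,0) = ((0:Fin 4),0,0) from by decide]
    norm_num [cont, chiex]; linarith
  · rw [show fEx (1,0,1) = ((3:Fin 4),1,0) from by decide]
    norm_num [cont, chiex]; linarith
  · rw [show fEx (1,0,2) = ((0:Fin 4),0,2) from by decide]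
    norm_num [cont, chiex]; linarith
  · rw [show fEx (2,0,0) = ((2:Fin 4),0,0) from by decide]
  · rw [show fEx (2,1,0) = ((0:Fin 4),0,1) from by decide]
    norm_num [cont, chiex]; linarith
  · rw [show fEx (3,0,0) = ((3:Fin 4),0,0) from by decide]

section Key

variable {a b c : ℚ}

/-- Explicit form of the boxes of Λ. -/
lemma mbBoxes_LamEx_eq :
    mbBoxes LamEx = {(1,0,0),(1,0,1),(1,0,2),(2,0,0),(2,1,0),(3,0,0)} := by decide

lemma mbBoxes_MEx_eq :
    mbBoxes MEx = {(0,0,0),(0,0,1),(0,0,2),(2,0,0),(3,0,0),(3,1,0)} := by decide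

lemma sum_LamEx (a b c : ℚ) :
    ∑ p ∈ mbBoxes LamEx, cont (chiex a b c) p = 8 + 2*a + b + 3*c := by
  rw [mbBoxes_LamEx_eq]
  rw [Finset.sum_insert (by decide), Finset.sum_insert (by decide),
    Finset.sum_insert (by decide), Finset.sum_insert (by decide),
    Finset.sum_insert (by decide), Finset.sum_singleton]
  norm_num [cont, chiex]
  ring

lemma sum_MEx (a b c : ℚ) :
    ∑ p ∈ mbBoxes MEx, cont (chiex a b c) p = 8 + a + 2*b := by
  rw [mbBoxes_MEx_eq]
  rw [Finset.sum_insert (by decide), Finset.sum_insert (by decide),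
    Finset.sum_insert (by decide), Finset.sum_insert (by decide),
    Finset.sum_insert (by decide), Finset.sum_singleton]
  norm_num [cont, chiex]
  ring

lemma key (h0 : 0 < a) (hab : a < b) (hbc : b < c) (hc1 : c < 1)
    (N : Fin 4 → YoungDiagram)
    (hLN : contGE (chiex a b c) LamEx N)
    (l m : Fin 4)
    (h1 : ∀ i, i ≠ l → ∀ p ∈ (N i).cells, p ∈ (MEx i).cells)
    (h2 : ∀ i, i ≠ m → ∀ p ∈ (MEx i).cells, p ∈ (N i).cells)
    (hNM : contGE (chiex a b c) N MEx) : N = MEx := by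
  -- total cardinality
  have hcN : (N 0).cells.card + (N 1).cells.card + (N 2).cells.card + (N 3).cells.card = 6 := by
    have h := (contGE_card_eq (chiex a b c) hLN).symm
    rw [card_mbBoxes, card_mbBoxes, Fin.sum_univ_four, Fin.sum_univ_four] at h
    have hL6 : (LamEx 0).card + (LamEx 1).card + (LamEx 2).card + (LamEx 3).card = 6 := by
      decide
    unfold YoungDiagram.card at h hL6
    omega
  -- sum bounds
  have hUB : ∑ p ∈ mbBoxes N, cont (chiex a b c) p ≤ 8 + 2*a + b + 3*c := by
    rw [← sum_LamEx a b c]; exact contGE_sum_le (chiex a b c) hLN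
  have hLB : 8 + a + 2*b ≤ ∑ p ∈ mbBoxes N, cont (chiex a b c) p := by
    rw [← sum_MEx a b c]; exact contGE_sum_le (chiex a b c) hNM
  -- max content
  have hmax : ∀ i : Fin 4, ∀ p ∈ (N i).cells, cont (chiex a b c) (i, p) ≤ c + 2 := by
    intro i p hp
    obtain ⟨q, hq, hle⟩ := contGE_exists_ge (chiex a b c) hLN (i, p) (mem_mbBoxes.2 hp)
    rw [mbBoxes_LamEx_eq] at hq
    simp only [Finset.mem_insert, Finset.mem_singleton] at hq
    rcases hq with rfl|rfl|rfl|rfl|rfl|rfl <;>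
      (norm_num [cont, chiex] at hle ⊢) <;> linarith
  -- components 2 and 3 are columns
  have hColN2 : (N 2).cells = (Finset.range (N 2).cells.card).image (fun t => (t,0)) := by
    have := young_col (μ := N 2) (fun hmem => by
      have := hmax 2 (0,1) ((YoungDiagram.mem_cells _).2 hmem)
      norm_num [cont, chiex] at this
      linarith)
    rwa [show (N 2).card = (N 2).cells.card from rfl] at this
  have hColN3 : (N 3).cells = (Finset.range (N 3).cells.card).image (fun t => (t,0)) := by
    have := young_col (μ := N 3) (fun hmem => by
      have := hmax 3 (0,1) ((YoungDiagram.mem_cells _).2 hmem)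
      norm_num [cont, chiex] at this
      linarith)
    rwa [show (N 3).card = (N 3).cells.card from rfl] at this
  -- no cell (0,3) in component 0
  have h03 : ((0:ℕ),(3:ℕ)) ∉ N 0 := fun hmem => by
    have := hmax 0 (0,3) ((YoungDiagram.mem_cells _).2 hmem)
    norm_num [cont, chiex] at this
    linarith
  -- explicit cells of MEx
  have hM0 : (MEx 0).cells = {(0,0),(0,1),(0,2)} := by decide
  have hM1 : (MEx 1).cells = ∅ := by decide
  have hM2 : (MEx 2).cells = {(0,0)} := by decide
  have hM3 : (MEx 3).cells = {(0,0),(1,0)} := by decide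
  rcases eq_or_ne l m with rfl | hlm
  -------------------------------------------------------------------
  -- CASE l = m
  -------------------------------------------------------------------
  · have heq : ∀ i, i ≠ l → (N i).cells = (MEx i).cells :=
      fun i hi => subset_antisymm (fun p hp => h1 i hi p hp) (fun p hp => h2 i hi p hp)
    fin_cases l
    · -- l = 0
      have e1 := heq 1 (by decide)
      have e2 := heq 2 (by decide)
      have e3 := heq 3 (by decide)
      have hc0 : (N 0).cells.card = 3 := by
        have c1 : (N 1).cells.card = 0 := by rw [e1]; decide
        have c2 : (N 2).cells.card = 1 := by rw [e2]; decide
        have c3 : (N 3).cells.card = 2 := by rw [e3]; decide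
        omega
      by_cases h10 : ((1:ℕ),(0:ℕ)) ∈ N 0
      · -- (1,0) ∈ N 0 : contradiction by sums
        exfalso
        have h00 : ((0:ℕ),(0:ℕ)) ∈ (N 0).cells :=
          young_zero_mem (Finset.card_pos.1 (by omega))
        have hsub2' : ({(0,0),(1,0)} : Finset (ℕ×ℕ)) ⊆ (N 0).cells := by
          intro p hp
          simp only [Finset.mem_insert, Finset.mem_singleton] at hp
          rcases hp with rfl | rfl
          · exact h00
          · exact (YoungDiagram.mem_cells _).2 h10
        obtain ⟨e, he, hne⟩ := Finset.exists_of_ssubset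
          (hsub2'.ssubset_of_ne (fun hcc => by rw [← hcc] at hc0; exact absurd hc0 (by decide)))
        have hcells0 : (N 0).cells = insert e {(0,0),(1,0)} := by
          refine (Finset.eq_of_subset_of_card_le ?_ ?_).symm
          · intro p hp
            rcases Finset.mem_insert.1 hp with rfl | hp'
            · exact he
            · exact hsub2' hp'
          · rw [hc0, Finset.card_insert_of_notMem hne]
            decide
        have hconte : cont (chiex a b c) ((0 : Fin 4), e) ≤ c + 2 := hmax 0 e he
        have hS : ∑ p ∈ mbBoxes N, cont (chiex a b c) p
            = cont (chiex a b c) ((0 : Fin 4), e) + 4 + a + 2*b := by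
          rw [sum_mbBoxes, Fin.sum_univ_four, hcells0, e1, hM1, e2, hM2, e3, hM3]
          rw [Finset.sum_insert hne]
          rw [Finset.sum_insert (by decide), Finset.sum_singleton, Finset.sum_empty,
            Finset.sum_singleton, Finset.sum_insert (by decide), Finset.sum_singleton]
          norm_num [cont, chiex]
          ring
        rw [hS] at hLB
        linarith
      · -- row of length 3, so N 0 = M 0
        have hrow := young_row h10
        rw [show (N 0).card = (N 0).cells.card from rfl, hc0] at hrow
        have e0 : (N 0).cells = (MEx 0).cells := by
          rw [hrow, hM0]; decide
        funext i
        fin_cases i <;> exact YoungDiagram.ext (by assumption)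
    · -- l = 1
      have e0 := heq 0 (by decide)
      have e2 := heq 2 (by decide)
      have e3 := heq 3 (by decide)
      have hc1' : (N 1).cells.card = 0 := by
        have c0 : (N 0).cells.card = 3 := by rw [e0]; decide
        have c2 : (N 2).cells.card = 1 := by rw [e2]; decide
        have c3 : (N 3).cells.card = 2 := by rw [e3]; decide
        omega
      have e1 : (N 1).cells = (MEx 1).cells := by
        rw [Finset.card_eq_zero.1 hc1', hM1]
      funext i
      fin_cases i <;> exact YoungDiagram.ext (by assumption)
    · -- l = 2
      have e0 := heq 0 (by decide)
      have e1 := heq 1 (by decide)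
      have e3 := heq 3 (by decide)
      have hc2' : (N 2).cells.card = 1 := by
        have c0 : (N 0).cells.card = 3 := by rw [e0]; decide
        have c1 : (N 1).cells.card = 0 := by rw [e1]; decide
        have c3 : (N 3).cells.card = 2 := by rw [e3]; decide
        omega
      have e2 : (N 2).cells = (MEx 2).cells := by
        rw [hColN2, hc2', hM2]; decide
      funext i
      fin_cases i <;> exact YoungDiagram.ext (by assumption)
    · -- l = 3
      have e0 := heq 0 (by decide)
      have e1 := heq 1 (by decide)
      have e2 := heq 2 (by decide)
      have hc3' : (N 3).cells.card = 2 := by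
        have c0 : (N 0).cells.card = 3 := by rw [e0]; decide
        have c1 : (N 1).cells.card = 0 := by rw [e1]; decide
        have c2 : (N 2).cells.card = 1 := by rw [e2]; decide
        omega
      have e3 : (N 3).cells = (MEx 3).cells := by
        rw [hColN3, hc3', hM3]; decide
      funext i
      fin_cases i <;> exact YoungDiagram.ext (by assumption)
  -------------------------------------------------------------------
  -- CASE l ≠ m
  -------------------------------------------------------------------
  · have heq : ∀ i, i ≠ l → i ≠ m → (N i).cells = (MEx i).cells :=
      fun i hl hm => subset_antisymm (fun p hp => h1 i hl p hp) (fun p hp => h2 i hm p hp)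
    have hMl : (MEx l).cells ⊆ (N l).cells := fun p hp => h2 l hlm p hp
    have hNm : (N m).cells ⊆ (MEx m).cells := fun p hp => h1 m (Ne.symm hlm) p hp
    have hdone : (N m).cells = (MEx m).cells → N = MEx := by
      intro em
      have hall : ∀ i, i ≠ l → (N i).cells = (MEx i).cells := by
        intro i hi
        rcases eq_or_ne i m with rfl | him
        · exact em
        · exact heq i hi him
      have hceq : (N l).cells = (MEx l).cells := by
        have hsN : ∑ i, (N i).cells.card = 6 := by rw [Fin.sum_univ_four]; omega
        have hsM : ∑ i : Fin 4, (MEx i).cells.card = 6 := by decide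
        have hrest : ∑ i ∈ Finset.univ.erase l, (N i).cells.card
            = ∑ i ∈ Finset.univ.erase l, (MEx i).cells.card :=
          Finset.sum_congr rfl (fun i hi => by rw [hall i (Finset.ne_of_mem_erase hi)])
        have hN' := Finset.add_sum_erase Finset.univ (fun i => (N i).cells.card)
          (Finset.mem_univ l)
        have hM' := Finset.add_sum_erase Finset.univ (fun i => (MEx i).cells.card)
          (Finset.mem_univ l)
        have hle : (N l).cells.card ≤ (MEx l).cells.card := by omega
        exact (Finset.eq_of_subset_of_card_le hMl hle).symm
      funext i
      rcases eq_or_ne i l with rfl | hi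
      · exact YoungDiagram.ext hceq
      · exact YoungDiagram.ext (hall i hi)
    rcases fin4 m with rfl | rfl | rfl | rfl
    · -- m = 0
      have h10 : ((1:ℕ),(0:ℕ)) ∉ N 0 := fun hmem => by
        have hh := hNm ((YoungDiagram.mem_cells _).2 hmem)
        rw [hM0] at hh
        exact absurd hh (by decide)
      have hrow := young_row h10
      rw [show (N 0).card = (N 0).cells.card from rfl] at hrow
      have hk0le : (N 0).cells.card ≤ 3 := by
        have hh := Finset.card_le_card hNm
        rw [hM0] at hh
        exact le_trans hh (by decide)
      rcases (by omega : (N 0).cells.card = 3 ∨ (N 0).cells.card = 2 ∨ (N 0).cells.card = 1 ∨ (N 0).cells.card = 0) with hk0 | hk0 | hk0 | hk0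
      · exact hdone (by rw [hrow, hk0, hM0]; decide)
      · -- k0 = 2
        have e0 : (N 0).cells = {(0,0),(0,1)} := by rw [hrow, hk0]; decide
        exfalso
        rcases fin4 l with rfl | rfl | rfl | rfl
        · exact hlm rfl
        · -- l = 1
          have e2 : (N 2).cells = {(0,0)} := by
            rw [heq 2 (by decide) (by decide), hM2]
          have e3 : (N 3).cells = {(0,0),(1,0)} := by
            rw [heq 3 (by decide) (by decide), hM3]
          have hc1' : (N 1).cells.card = 1 := by
            have d2 : (N 2).cells.card = 1 := by rw [e2]; decide
            have d3 : (N 3).cells.card = 2 := by rw [e3]; decide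
            omega
          have e1 : (N 1).cells = {((0:ℕ),(0:ℕ))} := young_card_one hc1'
          have hS : ∑ p ∈ mbBoxes N, cont (chiex a b c) p = 6 + 1*a + 2*b + 1*c := by
            rw [sum_mbBoxes, Fin.sum_univ_four, e0, e1, e2, e3]
            rw [Finset.sum_insert (by decide), Finset.sum_insert (by decide)]
            simp only [Finset.sum_singleton, Finset.sum_empty]
            norm_num [cont, chiex]
            try ring
          rw [hS] at hLB hUB
          linarith
        · -- l = 2
          have e1 : (N 1).cells = (∅ : Finset (ℕ×ℕ)) := by
            rw [heq 1 (by decide) (by decide), hM1]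
          have e3 : (N 3).cells = {(0,0),(1,0)} := by
            rw [heq 3 (by decide) (by decide), hM3]
          have hc2' : (N 2).cells.card = 2 := by
            have d1 : (N 1).cells.card = 0 := by rw [e1]; decide
            have d3 : (N 3).cells.card = 2 := by rw [e3]; decide
            omega
          have e2 : (N 2).cells = {(0,0),(1,0)} := by
            rw [hColN2, hc2']; decide
          have hS : ∑ p ∈ mbBoxes N, cont (chiex a b c) p = 7 + 2*a + 2*b := by
            rw [sum_mbBoxes, Fin.sum_univ_four, e0, e1, e2, e3]
            rw [Finset.sum_insert (by decide), Finset.sum_insert (by decide), Finset.sum_insert (by decide)]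
            simp only [Finset.sum_singleton, Finset.sum_empty]
            norm_num [cont, chiex]
            try ring
          rw [hS] at hLB hUB
          linarith
        · -- l = 3
          have e1 : (N 1).cells = (∅ : Finset (ℕ×ℕ)) := by
            rw [heq 1 (by decide) (by decide), hM1]
          have e2 : (N 2).cells = {(0,0)} := by
            rw [heq 2 (by decide) (by decide), hM2]
          have hc3' : (N 3).cells.card = 3 := by
            have d1 : (N 1).cells.card = 0 := by rw [e1]; decide
            have d2 : (N 2).cells.card = 1 := by rw [e2]; decide
            omega
          have e3 : (N 3).cells = {(0,0),(1,0),(2,0)} := by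
            rw [hColN3, hc3']; decide
          have hS : ∑ p ∈ mbBoxes N, cont (chiex a b c) p = 6 + 1*a + 3*b := by
            rw [sum_mbBoxes, Fin.sum_univ_four, e0, e1, e2, e3]
            rw [Finset.sum_insert (by decide), Finset.sum_insert (by decide), Finset.sum_insert (by decide)]
            simp only [Finset.sum_singleton, Finset.sum_empty]
            norm_num [cont, chiex]
            try ring
          rw [hS] at hLB hUB
          linarith
      · -- k0 = 1
        have e0 : (N 0).cells = {(0,0)} := by rw [hrow, hk0]; decide
        exfalso
        rcases fin4 l with rfl | rfl | rfl | rfl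
        · exact hlm rfl
        · -- l = 1
          have e2 : (N 2).cells = {(0,0)} := by
            rw [heq 2 (by decide) (by decide), hM2]
          have e3 : (N 3).cells = {(0,0),(1,0)} := by
            rw [heq 3 (by decide) (by decide), hM3]
          have hc1' : (N 1).cells.card = 2 := by
            have d2 : (N 2).cells.card = 1 := by rw [e2]; decide
            have d3 : (N 3).cells.card = 2 := by rw [e3]; decide
            omega
          rcases young_card_two hc1' with e1 | e1
          · have hS : ∑ p ∈ mbBoxes N, cont (chiex a b c) p = 6 + 1*a + 2*b + 2*c := by
              rw [sum_mbBoxes, Fin.sum_univ_four, e0, e1, e2, e3]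
              rw [Finset.sum_insert (by decide), Finset.sum_insert (by decide)]
              simp only [Finset.sum_singleton, Finset.sum_empty]
              norm_num [cont, chiex]
              try ring
            rw [hS] at hLB hUB
            linarith
          · have hS : ∑ p ∈ mbBoxes N, cont (chiex a b c) p = 4 + 1*a + 2*b + 2*c := by
              rw [sum_mbBoxes, Fin.sum_univ_four, e0, e1, e2, e3]
              rw [Finset.sum_insert (by decide), Finset.sum_insert (by decide)]
              simp only [Finset.sum_singleton, Finset.sum_empty]
              norm_num [cont, chiex]
              try ring
            rw [hS] at hLB hUB
            linarith
        · -- l = 2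
          have e1 : (N 1).cells = (∅ : Finset (ℕ×ℕ)) := by
            rw [heq 1 (by decide) (by decide), hM1]
          have e3 : (N 3).cells = {(0,0),(1,0)} := by
            rw [heq 3 (by decide) (by decide), hM3]
          have hc2' : (N 2).cells.card = 3 := by
            have d1 : (N 1).cells.card = 0 := by rw [e1]; decide
            have d3 : (N 3).cells.card = 2 := by rw [e3]; decide
            omega
          have e2 : (N 2).cells = {(0,0),(1,0),(2,0)} := by
            rw [hColN2, hc2']; decide
          have hS : ∑ p ∈ mbBoxes N, cont (chiex a b c) p = 6 + 3*a + 2*b := by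
            rw [sum_mbBoxes, Fin.sum_univ_four, e0, e1, e2, e3]
            rw [Finset.sum_insert (by decide), Finset.sum_insert (by decide), Finset.sum_insert (by decide)]
            simp only [Finset.sum_singleton, Finset.sum_empty]
            norm_num [cont, chiex]
            try ring
          rw [hS] at hLB hUB
          linarith
        · -- l = 3
          have e1 : (N 1).cells = (∅ : Finset (ℕ×ℕ)) := by
            rw [heq 1 (by decide) (by decide), hM1]
          have e2 : (N 2).cells = {(0,0)} := by
            rw [heq 2 (by decide) (by decide), hM2]
          have hc3' : (N 3).cells.card = 4 := by
            have d1 : (N 1).cells.card = 0 := by rw [e1]; decide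
            have d2 : (N 2).cells.card = 1 := by rw [e2]; decide
            omega
          have e3 : (N 3).cells = {(0,0),(1,0),(2,0),(3,0)} := by
            rw [hColN3, hc3']; decide
          have hS : ∑ p ∈ mbBoxes N, cont (chiex a b c) p = 4 + 1*a + 4*b := by
            rw [sum_mbBoxes, Fin.sum_univ_four, e0, e1, e2, e3]
            rw [Finset.sum_insert (by decide), Finset.sum_insert (by decide), Finset.sum_insert (by decide)]
            simp only [Finset.sum_singleton, Finset.sum_empty]
            norm_num [cont, chiex]
            try ring
          rw [hS] at hLB hUB
          linarith
      · -- k0 = 0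
        have e0 : (N 0).cells = (∅ : Finset (ℕ×ℕ)) := by rw [hrow, hk0]; decide
        exfalso
        rcases fin4 l with rfl | rfl | rfl | rfl
        · exact hlm rfl
        · -- l = 1
          have e2 : (N 2).cells = {(0,0)} := by
            rw [heq 2 (by decide) (by decide), hM2]
          have e3 : (N 3).cells = {(0,0),(1,0)} := by
            rw [heq 3 (by decide) (by decide), hM3]
          have hc1' : (N 1).cells.card = 3 := by
            have d2 : (N 2).cells.card = 1 := by rw [e2]; decide
            have d3 : (N 3).cells.card = 2 := by rw [e3]; decide
            omega
          by_cases h10' : ((1:ℕ),(0:ℕ)) ∈ N 1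
          · -- (1,0) ∈ N 1: one symbolic extra cell
            have h00 : ((0:ℕ),(0:ℕ)) ∈ (N 1).cells :=
              young_zero_mem (Finset.card_pos.1 (by omega))
            have hsub2' : ({(0,0),(1,0)} : Finset (ℕ×ℕ)) ⊆ (N 1).cells := by
              intro p hp
              rcases Finset.mem_insert.1 hp with rfl | hp'
              · exact h00
              · rw [Finset.mem_singleton] at hp'
                subst hp'
                exact (YoungDiagram.mem_cells _).2 h10'
            obtain ⟨e, he, hne⟩ := Finset.exists_of_ssubset
              (hsub2'.ssubset_of_ne (fun hcc => by rw [← hcc] at hc1'; exact absurd hc1' (by decide)))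
            have hcells1 : (N 1).cells = insert e {(0,0),(1,0)} := by
              refine (Finset.eq_of_subset_of_card_le ?_ ?_).symm
              · intro p hp
                rcases Finset.mem_insert.1 hp with rfl | hp'
                · exact he
                · exact hsub2' hp'
              · rw [hc1', Finset.card_insert_of_notMem hne]
                decide
            have hS : ∑ p ∈ mbBoxes N, cont (chiex a b c) p
                = cont (chiex a b c) ((1 : Fin 4), e) + 4 + 2*c + a + 2*b := by
              rw [sum_mbBoxes, Fin.sum_univ_four, e0, hcells1, e2, e3]
              rw [Finset.sum_insert hne]
              rw [Finset.sum_insert (by decide), Finset.sum_insert (by decide)]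
              simp only [Finset.sum_singleton, Finset.sum_empty]
              norm_num [cont, chiex]
              ring
            have hce : cont (chiex a b c) ((1 : Fin 4), e) = c + (e.2:ℚ) - (e.1:ℚ) := by
              norm_num [cont, chiex]
            have hgap : (e.1:ℚ) + 1 < (e.2:ℚ) := by
              rw [hS] at hLB
              rw [hce] at hLB
              linarith
            have hgapn : e.1 + 1 < e.2 := by exact_mod_cast hgap
            have h01 : ((0:ℕ),(1:ℕ)) ∈ (N 1).cells :=
              (YoungDiagram.mem_cells _).2
                ((N 1).up_left_mem (Nat.zero_le _) (by omega)
                  ((YoungDiagram.mem_cells _).1 he))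
            rw [hcells1] at h01
            rcases Finset.mem_insert.1 h01 with h' | h'
            · have h1 : e.1 = 0 := by rw [← h']
              have h2 : e.2 = 1 := by rw [← h']
              omega
            · exact absurd h' (by decide)
          · -- (1,0) ∉ N 1 : row of length 3
            have hrow1 := young_row h10'
            rw [show (N 1).card = (N 1).cells.card from rfl, hc1'] at hrow1
            have e1 : (N 1).cells = {(0,0),(0,1),(0,2)} := by rw [hrow1]; decide
            have hS : ∑ p ∈ mbBoxes N, cont (chiex a b c) p = 8 + 1*a + 2*b + 3*c := by
              rw [sum_mbBoxes, Fin.sum_univ_four, e0, e1, e2, e3]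
              rw [Finset.sum_insert (by decide), Finset.sum_insert (by decide), Finset.sum_insert (by decide)]
              simp only [Finset.sum_singleton, Finset.sum_empty]
              norm_num [cont, chiex]
              try ring
            rw [hS] at hLB hUB
            linarith
        · -- l = 2
          have e1 : (N 1).cells = (∅ : Finset (ℕ×ℕ)) := by
            rw [heq 1 (by decide) (by decide), hM1]
          have e3 : (N 3).cells = {(0,0),(1,0)} := by
            rw [heq 3 (by decide) (by decide), hM3]
          have hc2' : (N 2).cells.card = 4 := by
            have d1 : (N 1).cells.card = 0 := by rw [e1]; decide
            have d3 : (N 3).cells.card = 2 := by rw [e3]; decide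
            omega
          have e2 : (N 2).cells = {(0,0),(1,0),(2,0),(3,0)} := by
            rw [hColN2, hc2']; decide
          have hS : ∑ p ∈ mbBoxes N, cont (chiex a b c) p = 5 + 4*a + 2*b := by
            rw [sum_mbBoxes, Fin.sum_univ_four, e0, e1, e2, e3]
            rw [Finset.sum_insert (by decide), Finset.sum_insert (by decide), Finset.sum_insert (by decide), Finset.sum_insert (by decide)]
            simp only [Finset.sum_singleton, Finset.sum_empty]
            norm_num [cont, chiex]
            try ring
          rw [hS] at hLB hUB
          linarith
        · -- l = 3
          have e1 : (N 1).cells = (∅ : Finset (ℕ×ℕ)) := by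
            rw [heq 1 (by decide) (by decide), hM1]
          have e2 : (N 2).cells = {(0,0)} := by
            rw [heq 2 (by decide) (by decide), hM2]
          have hc3' : (N 3).cells.card = 5 := by
            have d1 : (N 1).cells.card = 0 := by rw [e1]; decide
            have d2 : (N 2).cells.card = 1 := by rw [e2]; decide
            omega
          have e3 : (N 3).cells = {(0,0),(1,0),(2,0),(3,0),(4,0)} := by
            rw [hColN3, hc3']; decide
          have hS : ∑ p ∈ mbBoxes N, cont (chiex a b c) p = 2 + 1*a + 5*b := by
            rw [sum_mbBoxes, Fin.sum_univ_four, e0, e1, e2, e3]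
            rw [Finset.sum_insert (by decide), Finset.sum_insert (by decide), Finset.sum_insert (by decide), Finset.sum_insert (by decide)]
            simp only [Finset.sum_singleton, Finset.sum_empty]
            norm_num [cont, chiex]
            try ring
          rw [hS] at hLB hUB
          linarith
    · -- m = 1
      refine hdone ?_
      rw [hM1]
      exact Finset.subset_empty.1 (by rw [← hM1]; exact hNm)
    · -- m = 2
      have hk2le : (N 2).cells.card ≤ 1 :=
        le_trans (Finset.card_le_card hNm) (by rw [hM2]; decide)
      rcases (by omega : (N 2).cells.card = 1 ∨ (N 2).cells.card = 0) with hk2 | hk2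
      · exact hdone (Finset.eq_of_subset_of_card_le hNm (by rw [hM2, hk2]; decide))
      · have e2' : (N 2).cells = (∅ : Finset (ℕ×ℕ)) := Finset.card_eq_zero.1 hk2
        exfalso
        rcases fin4 l with rfl | rfl | rfl | rfl
        · -- l = 0
          have e1 : (N 1).cells = (∅ : Finset (ℕ×ℕ)) := by
            rw [heq 1 (by decide) (by decide), hM1]
          have e2 := e2'
          have e3 : (N 3).cells = {(0,0),(1,0)} := by
            rw [heq 3 (by decide) (by decide), hM3]
          have hc0' : (N 0).cells.card = 4 := by
            have d1 : (N 1).cells.card = 0 := by rw [e1]; decide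
            have d2 : (N 2).cells.card = 0 := by rw [e2]; decide
            have d3 : (N 3).cells.card = 2 := by rw [e3]; decide
            omega
          have hsub0 : ({(0,0),(0,1),(0,2)} : Finset (ℕ×ℕ)) ⊆ (N 0).cells := by
            rw [← hM0]; exact hMl
          have e0 := young_row3_plus hsub0 hc0' h03
          have hS : ∑ p ∈ mbBoxes N, cont (chiex a b c) p = 5 + 2*b := by
            rw [sum_mbBoxes, Fin.sum_univ_four, e0, e1, e2, e3]
            rw [Finset.sum_insert (by decide), Finset.sum_insert (by decide), Finset.sum_insert (by decide), Finset.sum_insert (by decide)]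
            simp only [Finset.sum_singleton, Finset.sum_empty]
            norm_num [cont, chiex]
            try ring
          rw [hS] at hLB hUB
          linarith
        · -- l = 1
          have e0 : (N 0).cells = {(0,0),(0,1),(0,2)} := by
            rw [heq 0 (by decide) (by decide), hM0]
          have e2 := e2'
          have e3 : (N 3).cells = {(0,0),(1,0)} := by
            rw [heq 3 (by decide) (by decide), hM3]
          have hc1' : (N 1).cells.card = 1 := by
            have d0 : (N 0).cells.card = 3 := by rw [e0]; decide
            have d2 : (N 2).cells.card = 0 := by rw [e2]; decide
            have d3 : (N 3).cells.card = 2 := by rw [e3]; decide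
            omega
          have e1 : (N 1).cells = {((0:ℕ),(0:ℕ))} := young_card_one hc1'
          have hS : ∑ p ∈ mbBoxes N, cont (chiex a b c) p = 6 + 2*b + 1*c := by
            rw [sum_mbBoxes, Fin.sum_univ_four, e0, e1, e2, e3]
            rw [Finset.sum_insert (by decide), Finset.sum_insert (by decide), Finset.sum_insert (by decide)]
            simp only [Finset.sum_singleton, Finset.sum_empty]
            norm_num [cont, chiex]
            try ring
          rw [hS] at hLB hUB
          linarith
        · exact hlm rfl
        · -- l = 3
          have e0 : (N 0).cells = {(0,0),(0,1),(0,2)} := by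
            rw [heq 0 (by decide) (by decide), hM0]
          have e1 : (N 1).cells = (∅ : Finset (ℕ×ℕ)) := by
            rw [heq 1 (by decide) (by decide), hM1]
          have e2 := e2'
          have hc3' : (N 3).cells.card = 3 := by
            have d0 : (N 0).cells.card = 3 := by rw [e0]; decide
            have d1 : (N 1).cells.card = 0 := by rw [e1]; decide
            have d2 : (N 2).cells.card = 0 := by rw [e2]; decide
            omega
          have e3 : (N 3).cells = {(0,0),(1,0),(2,0)} := by
            rw [hColN3, hc3']; decide
          have hS : ∑ p ∈ mbBoxes N, cont (chiex a b c) p = 6 + 3*b := by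
            rw [sum_mbBoxes, Fin.sum_univ_four, e0, e1, e2, e3]
            rw [Finset.sum_insert (by decide), Finset.sum_insert (by decide), Finset.sum_insert (by decide), Finset.sum_insert (by decide)]
            simp only [Finset.sum_singleton, Finset.sum_empty]
            norm_num [cont, chiex]
            try ring
          rw [hS] at hLB hUB
          linarith
    · -- m = 3
      have hk3le : (N 3).cells.card ≤ 2 :=
        le_trans (Finset.card_le_card hNm) (by rw [hM3]; decide)
      rcases (by omega : (N 3).cells.card = 2 ∨ (N 3).cells.card = 1 ∨ (N 3).cells.card = 0) with hk3 | hk3 | hk3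
      · exact hdone (Finset.eq_of_subset_of_card_le hNm (by rw [hM3, hk3]; decide))
      · -- k3 = 1
        have e3 : (N 3).cells = {((0:ℕ),(0:ℕ))} := by rw [hColN3, hk3]; decide
        exfalso
        rcases fin4 l with rfl | rfl | rfl | rfl
        · -- l = 0
          have e1 : (N 1).cells = (∅ : Finset (ℕ×ℕ)) := by
            rw [heq 1 (by decide) (by decide), hM1]
          have e2 : (N 2).cells = {(0,0)} := by
            rw [heq 2 (by decide) (by decide), hM2]
          have hc0' : (N 0).cells.card = 4 := by
            have d1 : (N 1).cells.card = 0 := by rw [e1]; decide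
            have d2 : (N 2).cells.card = 1 := by rw [e2]; decide
            have d3 : (N 3).cells.card = 1 := by rw [e3]; decide
            omega
          have hsub0 : ({(0,0),(0,1),(0,2)} : Finset (ℕ×ℕ)) ⊆ (N 0).cells := by
            rw [← hM0]; exact hMl
          have e0 := young_row3_plus hsub0 hc0' h03
          have hS : ∑ p ∈ mbBoxes N, cont (chiex a b c) p = 6 + 1*a + 1*b := by
            rw [sum_mbBoxes, Fin.sum_univ_four, e0, e1, e2, e3]
            rw [Finset.sum_insert (by decide), Finset.sum_insert (by decide), Finset.sum_insert (by decide)]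
            simp only [Finset.sum_singleton, Finset.sum_empty]
            norm_num [cont, chiex]
            try ring
          rw [hS] at hLB hUB
          linarith
        · -- l = 1
          have e0 : (N 0).cells = {(0,0),(0,1),(0,2)} := by
            rw [heq 0 (by decide) (by decide), hM0]
          have e2 : (N 2).cells = {(0,0)} := by
            rw [heq 2 (by decide) (by decide), hM2]
          have hc1' : (N 1).cells.card = 1 := by
            have d0 : (N 0).cells.card = 3 := by rw [e0]; decide
            have d2 : (N 2).cells.card = 1 := by rw [e2]; decide
            have d3 : (N 3).cells.card = 1 := by rw [e3]; decide
            omega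
          have e1 : (N 1).cells = {((0:ℕ),(0:ℕ))} := young_card_one hc1'
          have hS : ∑ p ∈ mbBoxes N, cont (chiex a b c) p = 7 + 1*a + 1*b + 1*c := by
            rw [sum_mbBoxes, Fin.sum_univ_four, e0, e1, e2, e3]
            rw [Finset.sum_insert (by decide), Finset.sum_insert (by decide)]
            simp only [Finset.sum_singleton, Finset.sum_empty]
            norm_num [cont, chiex]
            try ring
          rw [hS] at hLB hUB
          linarith
        · -- l = 2
          have e0 : (N 0).cells = {(0,0),(0,1),(0,2)} := by
            rw [heq 0 (by decide) (by decide), hM0]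
          have e1 : (N 1).cells = (∅ : Finset (ℕ×ℕ)) := by
            rw [heq 1 (by decide) (by decide), hM1]
          have hc2' : (N 2).cells.card = 2 := by
            have d0 : (N 0).cells.card = 3 := by rw [e0]; decide
            have d1 : (N 1).cells.card = 0 := by rw [e1]; decide
            have d3 : (N 3).cells.card = 1 := by rw [e3]; decide
            omega
          have e2 : (N 2).cells = {(0,0),(1,0)} := by
            rw [hColN2, hc2']; decide
          have hS : ∑ p ∈ mbBoxes N, cont (chiex a b c) p = 8 + 2*a + 1*b := by
            rw [sum_mbBoxes, Fin.sum_univ_four, e0, e1, e2, e3]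
            rw [Finset.sum_insert (by decide), Finset.sum_insert (by decide), Finset.sum_insert (by decide)]
            simp only [Finset.sum_singleton, Finset.sum_empty]
            norm_num [cont, chiex]
            try ring
          rw [hS] at hLB hUB
          linarith
        · exact hlm rfl
      · -- k3 = 0
        have e3 : (N 3).cells = (∅ : Finset (ℕ×ℕ)) := Finset.card_eq_zero.1 hk3
        exfalso
        rcases fin4 l with rfl | rfl | rfl | rfl
        · -- l = 0
          have e1 : (N 1).cells = (∅ : Finset (ℕ×ℕ)) := by
            rw [heq 1 (by decide) (by decide), hM1]
          have e2 : (N 2).cells = {(0,0)} := by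
            rw [heq 2 (by decide) (by decide), hM2]
          have hc0' : (N 0).cells.card = 5 := by
            have d1 : (N 1).cells.card = 0 := by rw [e1]; decide
            have d2 : (N 2).cells.card = 1 := by rw [e2]; decide
            have d3 : (N 3).cells.card = 0 := by rw [e3]; decide
            omega
          have hsub0 : ({(0,0),(0,1),(0,2)} : Finset (ℕ×ℕ)) ⊆ (N 0).cells := by
            rw [← hM0]; exact hMl
          rcases young_row3_plus2 hsub0 hc0' h03 with e0 | e0
          · have hS : ∑ p ∈ mbBoxes N, cont (chiex a b c) p = 4 + 1*a := by
              rw [sum_mbBoxes, Fin.sum_univ_four, e0, e1, e2, e3]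
              rw [Finset.sum_insert (by decide), Finset.sum_insert (by decide), Finset.sum_insert (by decide), Finset.sum_insert (by decide)]
              simp only [Finset.sum_singleton, Finset.sum_empty]
              norm_num [cont, chiex]
              try ring
            rw [hS] at hLB hUB
            linarith
          · have hS : ∑ p ∈ mbBoxes N, cont (chiex a b c) p = 2 + 1*a := by
              rw [sum_mbBoxes, Fin.sum_univ_four, e0, e1, e2, e3]
              rw [Finset.sum_insert (by decide), Finset.sum_insert (by decide), Finset.sum_insert (by decide), Finset.sum_insert (by decide)]
              simp only [Finset.sum_singleton, Finset.sum_empty]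
              norm_num [cont, chiex]
              try ring
            rw [hS] at hLB hUB
            linarith
        · -- l = 1
          have e0 : (N 0).cells = {(0,0),(0,1),(0,2)} := by
            rw [heq 0 (by decide) (by decide), hM0]
          have e2 : (N 2).cells = {(0,0)} := by
            rw [heq 2 (by decide) (by decide), hM2]
          have hc1' : (N 1).cells.card = 2 := by
            have d0 : (N 0).cells.card = 3 := by rw [e0]; decide
            have d2 : (N 2).cells.card = 1 := by rw [e2]; decide
            have d3 : (N 3).cells.card = 0 := by rw [e3]; decide
            omega
          rcases young_card_two hc1' with e1 | e1
          · have hS : ∑ p ∈ mbBoxes N, cont (chiex a b c) p = 6 + 1*a + 2*c := by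
              rw [sum_mbBoxes, Fin.sum_univ_four, e0, e1, e2, e3]
              rw [Finset.sum_insert (by decide), Finset.sum_insert (by decide), Finset.sum_insert (by decide)]
              simp only [Finset.sum_singleton, Finset.sum_empty]
              norm_num [cont, chiex]
              try ring
            rw [hS] at hLB hUB
            linarith
          · have hS : ∑ p ∈ mbBoxes N, cont (chiex a b c) p = 4 + 1*a + 2*c := by
              rw [sum_mbBoxes, Fin.sum_univ_four, e0, e1, e2, e3]
              rw [Finset.sum_insert (by decide), Finset.sum_insert (by decide), Finset.sum_insert (by decide)]
              simp only [Finset.sum_singleton, Finset.sum_empty]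
              norm_num [cont, chiex]
              try ring
            rw [hS] at hLB hUB
            linarith
        · -- l = 2
          have e0 : (N 0).cells = {(0,0),(0,1),(0,2)} := by
            rw [heq 0 (by decide) (by decide), hM0]
          have e1 : (N 1).cells = (∅ : Finset (ℕ×ℕ)) := by
            rw [heq 1 (by decide) (by decide), hM1]
          have hc2' : (N 2).cells.card = 3 := by
            have d0 : (N 0).cells.card = 3 := by rw [e0]; decide
            have d1 : (N 1).cells.card = 0 := by rw [e1]; decide
            have d3 : (N 3).cells.card = 0 := by rw [e3]; decide
            omega
          have e2 : (N 2).cells = {(0,0),(1,0),(2,0)} := by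
            rw [hColN2, hc2']; decide
          have hS : ∑ p ∈ mbBoxes N, cont (chiex a b c) p = 6 + 3*a := by
            rw [sum_mbBoxes, Fin.sum_univ_four, e0, e1, e2, e3]
            rw [Finset.sum_insert (by decide), Finset.sum_insert (by decide), Finset.sum_insert (by decide), Finset.sum_insert (by decide)]
            simp only [Finset.sum_singleton, Finset.sum_empty]
            norm_num [cont, chiex]
            try ring
          rw [hS] at hLB hUB
          linarith
        · exact hlm rfl

end Key


section Final

lemma contGE_refl' {r : ℕ} (χ : Fin r → ℚ) (A : Fin r → YoungDiagram) : contGE χ A A :=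
  ⟨Equiv.refl _, fun _ => le_refl _⟩

lemma contGE_trans' {r : ℕ} (χ : Fin r → ℚ) {A B C : Fin r → YoungDiagram}
    (h1 : contGE χ A B) (h2 : contGE χ B C) : contGE χ A C := by
  obtain ⟨e, he⟩ := h1
  obtain ⟨f, hf⟩ := h2
  exact ⟨e.trans f, fun p => le_trans (hf (e p)) (he p)⟩

end Final

/-- Λ ≥_χ M but not Λ ⊵_χ M, so ≥_χ strictly contains ⊵_χ in general. -/
theorem example_orders_differ (a b c : ℚ)
    (h0 : 0 < a) (hab : a < b) (hbc : b < c) (hc1 : c < 1) :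
    contGE (chiex a b c) LamEx MEx ∧ ¬ adjOrder (chiex a b c) LamEx MEx := by
  refine ⟨part1 a b c h0 hab hbc hc1, ?_⟩
  intro h
  have hinv : ∀ N, adjOrder (chiex a b c) LamEx N →
      contGE (chiex a b c) LamEx N ∧ N ≠ MEx := by
    intro N hN
    induction hN with
    | refl =>
      refine ⟨contGE_refl' _ _, fun hEq => ?_⟩
      exact absurd (congrArg YoungDiagram.cells (congrFun hEq 1)) (by decide)
    | tail hab' hstep ih =>
      obtain ⟨hGE, hne⟩ := ih
      obtain ⟨hadj, hGE2⟩ := hstep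
      refine ⟨contGE_trans' _ hGE hGE2, fun hEq => ?_⟩
      subst hEq
      obtain ⟨l, m, dy, dx, w1, w2, _⟩ := hadj
      exact hne (key h0 hab hbc hc1 _ hGE l m w1 w2 hGE2)
  exact (hinv MEx h).2 rfl
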